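/- Let f, g ∈ H¹ of the circle [0,2π] be real-valued, let ν ∈ [0,1] and k ∈ ℤ. Then |⟨f e_k, g⟩|² ≤ C (1 ∧ |k|^{-2ν}) (‖f‖ ‖g‖)^{2-2ν} (‖f‖_{H¹} ‖g‖_{H¹})^{2ν}, where e_k(x) = e^{ikx}, ⟨·,·⟩ is the normalized L² inner product, and C is a constant independent of f, g, k, ν. -/

import Mathlib

open MeasureTheory Real Filter

/-- `k`-th Fourier coefficient of a `2π`-periodic function, with the normalized measure. -/
noncomputable def fCoef (f : ℝ → ℂ) (n : ℤ) : ℂ :=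
  (1 / (2 * π) : ℂ) * ∫ x in (0:ℝ)..(2 * π), f x * Complex.exp (-Complex.I * n * x)

/-- normalized L² norm on [0,2π] -/
noncomputable def nL2 (f : ℝ → ℂ) : ℝ :=
  Real.sqrt ((1 / (2 * π)) * ∫ x in (0:ℝ)..(2 * π), ‖f x‖ ^ 2)

/-- H¹ norm of a 2π-periodic function, via Fourier coefficients. -/
noncomputable def nH1 (f : ℝ → ℂ) : ℝ :=
  Real.sqrt (∑' n : ℤ, (1 + (n : ℝ) ^ 2) * ‖fCoef f n‖ ^ 2)

/-! The pairing `⟨f e_k, g⟩` is, by Parseval, the series `∑ₙ f̂(n - k) conj (ĝ(n))`.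
Cauchy–Schwarz bounds it by `‖f‖ ‖g‖`, and Peetre's inequality
`1 + k² ≤ 2 (1 + (n - k)²) (1 + n²)` moves the weight `√(1 + k²)` onto the two factors, so
that `√(1 + k²) |⟨f e_k, g⟩| ≤ √2 ‖f‖_{H¹} ‖g‖_{H¹}`. Interpolating `P ≤ X ^ (1 - ν) * Y ^ ν` between the
squares of these two bounds gives the claim with `C = 2`. -/

open ComplexConjugate

theorem hasSum_conj_fourierCoeffOn_mul {a b : ℝ} (hab : a < b) {f g : ℝ → ℂ}
    (hf : MemLp f 2 (volume.restrict (Set.Ioc a b)))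
    (hg : MemLp g 2 (volume.restrict (Set.Ioc a b))) :
    HasSum (fun n => conj (fourierCoeffOn hab f n) * fourierCoeffOn hab g n)
      ((b - a)⁻¹ • ∫ x in a..b, conj (f x) * g x) := by
  have := Fact.mk (by linarith : 0 < b - a)
  rw [← add_sub_cancel a b] at hf hg
  have hF := hf.memLp_liftIoc.haarAddCircle
  have hG := hg.memLp_liftIoc.haarAddCircle
  have hcoeff (n : ℤ) : conj (fourierCoeffOn hab f n) * fourierCoeffOn hab g n =
      inner ℂ (hF.toLp _) (fourierBasis n) * inner ℂ (fourierBasis n) (hG.toLp _) := by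
    rw [← inner_conj_symm, ← fourierBasis.repr_apply_apply, ← fourierBasis.repr_apply_apply,
      fourierBasis_repr, fourierBasis_repr, fourierCoeff_congr_ae hF.coeFn_toLp,
      fourierCoeff_congr_ae hG.coeFn_toLp]
    rfl
  have hinner : inner ℂ (hF.toLp _) (hG.toLp _) = (b - a)⁻¹ • ∫ x in a..b, conj (f x) * g x := by
    have h := AddCircle.integral_liftIoc_eq_intervalIntegral (T := b - a) (t := a)
      (f := fun x => conj (f x) * g x)
    rw [add_sub_cancel] at h
    rw [L2.inner_def, ← h, ← AddCircle.integral_haarAddCircle]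
    refine integral_congr_ae ?_
    filter_upwards [hF.coeFn_toLp, hG.coeFn_toLp] with x hxf hxg
    rw [RCLike.inner_apply, hxf, hxg, mul_comm]
    rfl
  simpa only [hcoeff, hinner] using fourierBasis.hasSum_inner_mul_inner hF.toLp hG.toLp

theorem fourierCoeffOn_fourier_mul {a b : ℝ} (hab : a < b) (f : ℝ → ℂ) (k n : ℤ) :
    fourierCoeffOn hab (fun x => fourier k (x : AddCircle (b - a)) * f x) n =
      fourierCoeffOn hab f (n - k) := by
  simp only [fourierCoeffOn_eq_integral, smul_eq_mul, ← mul_assoc, ← fourier_add]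
  congr 3 with x
  ring_nf

theorem Continuous.memLp_two_restrict_Ioc {f : ℝ → ℂ} (hf : Continuous f) (a b : ℝ) :
    MemLp f 2 (volume.restrict (Set.Ioc a b)) :=
  (memLp_two_iff_integrable_sq_norm hf.aestronglyMeasurable).2
    ((hf.norm.pow 2).integrableOn_Icc.mono_set Set.Ioc_subset_Icc_self)

theorem fCoef_eq_fourierCoeffOn (f : ℝ → ℂ) (n : ℤ) :
    fCoef f n = fourierCoeffOn two_pi_pos f n := by
  rw [fCoef, fourierCoeffOn_eq_integral, sub_zero, Complex.real_smul]
  push_cast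
  congr 2 with x
  rw [fourier_coe_apply, smul_eq_mul, mul_comm]
  congr 2
  push_cast
  field_simp

theorem nL2_nonneg (f : ℝ → ℂ) : 0 ≤ nL2 f := sqrt_nonneg _

theorem nH1_nonneg (f : ℝ → ℂ) : 0 ≤ nH1 f := sqrt_nonneg _

theorem hasSum_sq_norm_fCoef {f : ℝ → ℂ} (hf : Continuous f) :
    HasSum (fun n => ‖fCoef f n‖ ^ 2) (nL2 f ^ 2) := by
  have h := hasSum_sq_fourierCoeffOn two_pi_pos (hf.memLp_two_restrict_Ioc 0 (2 * π))
  rw [nL2, sq_sqrt (mul_nonneg (by positivity)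
    (intervalIntegral.integral_nonneg two_pi_pos.le fun x _ => by positivity))]
  simpa only [fCoef_eq_fourierCoeffOn, sub_zero, smul_eq_mul, one_div] using h

noncomputable def twistedInner (f g : ℝ → ℂ) (k : ℤ) : ℂ :=
  (1 / (2 * π) : ℂ) * ∫ x in (0:ℝ)..(2 * π), f x * Complex.exp (Complex.I * k * x) * conj (g x)

theorem hasSum_fCoef_sub_mul_conj_fCoef {f g : ℝ → ℂ} (hf : Continuous f) (hg : Continuous g)
    (k : ℤ) : HasSum (fun n => fCoef f (n - k) * conj (fCoef g n)) (twistedInner f g k) := by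
  -- `fourierCoeffOn` on `[0, 2π]` lives on `AddCircle (2 * π - 0)`, so `e_k` is taken there.
  have hfk : Continuous fun x : ℝ => fourier k (x : AddCircle (2 * π - 0)) * f x :=
    ((fourier k).continuous.comp continuous_quot_mk).mul hf
  have h := hasSum_conj_fourierCoeffOn_mul two_pi_pos (hg.memLp_two_restrict_Ioc 0 (2 * π))
    (hfk.memLp_two_restrict_Ioc 0 (2 * π))
  simp only [fourierCoeffOn_fourier_mul] at h
  simp only [← fCoef_eq_fourierCoeffOn, mul_comm (conj _)] at h
  convert h using 1
  rw [twistedInner, Complex.real_smul, sub_zero]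
  push_cast
  rw [one_div]
  congr 1
  refine intervalIntegral.integral_congr fun x _ => ?_
  rw [fourier_coe_apply, mul_comm (f x)]
  congr 3
  push_cast
  field_simp

theorem summable_and_tsum_mul_sub_le {a b : ℤ → ℝ} (ha : ∀ n, 0 ≤ a n) (hb : ∀ n, 0 ≤ b n)
    (ha2 : Summable fun n => a n ^ 2) (hb2 : Summable fun n => b n ^ 2) (k : ℤ) :
    (Summable fun n => a (n - k) * b n) ∧
      ∑' n, a (n - k) * b n ≤ √(∑' n, a n ^ 2) * √(∑' n, b n ^ 2) := by
  have ha2k : Summable fun n => a (n - k) ^ 2 := (Equiv.subRight k).summable_iff.2 ha2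
  have hcs := summable_and_inner_le_Lp_mul_Lq_tsum_of_nonneg HolderConjugate.two_two
    (fun n => ha (n - k)) hb (by exact_mod_cast ha2k) (by exact_mod_cast hb2)
  refine ⟨hcs.1, hcs.2.trans_eq ?_⟩
  rw [sqrt_eq_rpow, sqrt_eq_rpow, ← (Equiv.subRight k).tsum_eq (fun n => a n ^ 2)]
  norm_cast

theorem summable_norm_fCoef_sub_mul {f g : ℝ → ℂ} (hf : Continuous f) (hg : Continuous g)
    (k : ℤ) : Summable fun n => ‖fCoef f (n - k)‖ * ‖fCoef g n‖ :=
  (summable_and_tsum_mul_sub_le (fun _ => norm_nonneg _) (fun _ => norm_nonneg _)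
    (hasSum_sq_norm_fCoef hf).summable (hasSum_sq_norm_fCoef hg).summable k).1

theorem norm_twistedInner_le_tsum {f g : ℝ → ℂ} (hf : Continuous f) (hg : Continuous g)
    (k : ℤ) : ‖twistedInner f g k‖ ≤ ∑' n, ‖fCoef f (n - k)‖ * ‖fCoef g n‖ := by
  have hnorm (n : ℤ) : ‖fCoef f (n - k) * conj (fCoef g n)‖ = ‖fCoef f (n - k)‖ * ‖fCoef g n‖ := by
    rw [norm_mul, Complex.norm_conj]
  rw [← (hasSum_fCoef_sub_mul_conj_fCoef hf hg k).tsum_eq, ← tsum_congr hnorm]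
  exact norm_tsum_le_tsum_norm ((summable_congr hnorm).2 (summable_norm_fCoef_sub_mul hf hg k))

theorem norm_twistedInner_le_nL2_mul {f g : ℝ → ℂ} (hf : Continuous f) (hg : Continuous g)
    (k : ℤ) : ‖twistedInner f g k‖ ≤ nL2 f * nL2 g := by
  refine (norm_twistedInner_le_tsum hf hg k).trans ?_
  have hcs := (summable_and_tsum_mul_sub_le (fun _ => norm_nonneg _) (fun _ => norm_nonneg _)
    (hasSum_sq_norm_fCoef hf).summable (hasSum_sq_norm_fCoef hg).summable k).2
  rwa [(hasSum_sq_norm_fCoef hf).tsum_eq, (hasSum_sq_norm_fCoef hg).tsum_eq,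
    sqrt_sq (nL2_nonneg f), sqrt_sq (nL2_nonneg g)] at hcs

theorem peetre_one_add_sq (x y : ℝ) : 1 + y ^ 2 ≤ 2 * ((1 + (x - y) ^ 2) * (1 + x ^ 2)) := by
  nlinarith [sq_nonneg (2 * x - y), sq_nonneg (x * (x - y))]

theorem sqrt_one_add_sq_mul_norm_twistedInner_le {f g : ℝ → ℂ} (hf : Continuous f)
    (hg : Continuous g) (hf1 : Summable fun n : ℤ => (1 + (n : ℝ) ^ 2) * ‖fCoef f n‖ ^ 2)
    (hg1 : Summable fun n : ℤ => (1 + (n : ℝ) ^ 2) * ‖fCoef g n‖ ^ 2) (k : ℤ) :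
    √(1 + (k : ℝ) ^ 2) * ‖twistedInner f g k‖ ≤ √2 * (nH1 f * nH1 g) := by
  set w : ℤ → ℝ := fun n => √(1 + (n : ℝ) ^ 2)
  have hw2 (n : ℤ) (c : ℝ) : (w n * c) ^ 2 = (1 + (n : ℝ) ^ 2) * c ^ 2 := by
    rw [mul_pow, sq_sqrt (by positivity)]
  have hcs := summable_and_tsum_mul_sub_le (a := fun n => w n * ‖fCoef f n‖)
    (b := fun n => w n * ‖fCoef g n‖) (fun _ => by positivity) (fun _ => by positivity)
    (by simpa only [hw2] using hf1) (by simpa only [hw2] using hg1) k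
  have hweight (n : ℤ) : √(1 + (k : ℝ) ^ 2) * (‖fCoef f (n - k)‖ * ‖fCoef g n‖) ≤
      √2 * ((w (n - k) * ‖fCoef f (n - k)‖) * (w n * ‖fCoef g n‖)) := by
    have hsq : √(1 + (k : ℝ) ^ 2) ≤ √2 * (w (n - k) * w n) := by
      rw [← sqrt_mul (by positivity), ← sqrt_mul zero_le_two]
      refine sqrt_le_sqrt ?_
      push_cast
      exact peetre_one_add_sq n k
    calc _ ≤ (√2 * (w (n - k) * w n)) * (‖fCoef f (n - k)‖ * ‖fCoef g n‖) := by gcongr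
      _ = _ := by ring
  calc √(1 + (k : ℝ) ^ 2) * ‖twistedInner f g k‖
      ≤ √(1 + (k : ℝ) ^ 2) * ∑' n, ‖fCoef f (n - k)‖ * ‖fCoef g n‖ := by
        gcongr; exact norm_twistedInner_le_tsum hf hg k
    _ = ∑' n, √(1 + (k : ℝ) ^ 2) * (‖fCoef f (n - k)‖ * ‖fCoef g n‖) := tsum_mul_left.symm
    _ ≤ ∑' n, √2 * ((w (n - k) * ‖fCoef f (n - k)‖) * (w n * ‖fCoef g n‖)) :=
        ((summable_norm_fCoef_sub_mul hf hg k).mul_left _).tsum_le_tsum hweight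
          (hcs.1.mul_left _)
    _ = √2 * ∑' n, (w (n - k) * ‖fCoef f (n - k)‖) * (w n * ‖fCoef g n‖) := tsum_mul_left
    _ ≤ √2 * (nH1 f * nH1 g) := by
        gcongr
        have := hcs.2
        simp only [hw2] at this
        exact this

theorem sq_norm_twistedInner_le_nH1_mul {f g : ℝ → ℂ} (hf : Continuous f)
    (hg : Continuous g) (hf1 : Summable fun n : ℤ => (1 + (n : ℝ) ^ 2) * ‖fCoef f n‖ ^ 2)
    (hg1 : Summable fun n : ℤ => (1 + (n : ℝ) ^ 2) * ‖fCoef g n‖ ^ 2) (k : ℤ) :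
    ‖twistedInner f g k‖ ^ 2 ≤ 2 * (1 + (k : ℝ) ^ 2)⁻¹ * (nH1 f * nH1 g) ^ 2 := by
  have h := pow_le_pow_left₀ (by positivity)
    (sqrt_one_add_sq_mul_norm_twistedInner_le hf hg hf1 hg1 k) 2
  rw [mul_pow, mul_pow, sq_sqrt (by positivity), sq_sqrt zero_le_two] at h
  rw [mul_comm 2, mul_assoc, le_inv_mul_iff₀ (by positivity)]
  linarith

theorem le_rpow_mul_rpow_of_le_of_le {p x y ν : ℝ} (hp : 0 ≤ p) (hx : p ≤ x) (hy : p ≤ y)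
    (hν0 : 0 ≤ ν) (hν1 : ν ≤ 1) : p ≤ x ^ (1 - ν) * y ^ ν :=
  calc p = p ^ (1 - ν) * p ^ ν := by rw [← rpow_add' hp (by norm_num), sub_add_cancel, rpow_one]
    _ ≤ x ^ (1 - ν) * y ^ ν := mul_le_mul (rpow_le_rpow hp hx (by linarith))
      (rpow_le_rpow hp hy hν0) (by positivity) (rpow_nonneg (hp.trans hx) _)

theorem inv_one_add_sq_rpow_le (k : ℤ) {ν : ℝ} (hν : 0 ≤ ν) :
    ((1 + (k : ℝ) ^ 2)⁻¹) ^ ν ≤ if k = 0 then 1 else |(k : ℝ)| ^ (-(2 * ν)) := by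
  split_ifs with hk
  · simp [hk]
  · rw [show -(2 * ν) = -2 * ν by ring, rpow_mul (abs_nonneg _), rpow_neg (abs_nonneg _),
      rpow_two, sq_abs]
    gcongr
    linarith

/-- Lemma 4.9: `|⟨f e_k, g⟩|² ≲ (1 ∧ |k|^{-2ν}) (‖f‖‖g‖)^{2-2ν} (‖f‖_{H¹}‖g‖_{H¹})^{2ν}`. -/
theorem stmt_1 :
    ∃ C : ℝ, 0 < C ∧ ∀ (f g : ℝ → ℂ) (ν : ℝ) (k : ℤ),
      Continuous f → Continuous g →
      (∀ x, f (x + 2 * π) = f x) → (∀ x, g (x + 2 * π) = g x) →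
      (∀ x, (f x).im = 0) → (∀ x, (g x).im = 0) →
      Summable (fun n : ℤ => (1 + (n : ℝ) ^ 2) * ‖fCoef f n‖ ^ 2) →
      Summable (fun n : ℤ => (1 + (n : ℝ) ^ 2) * ‖fCoef g n‖ ^ 2) →
      0 ≤ ν → ν ≤ 1 →
      ‖(1 / (2 * π) : ℂ) * ∫ x in (0:ℝ)..(2 * π),
          f x * Complex.exp (Complex.I * k * x) * (starRingEnd ℂ) (g x)‖ ^ 2 ≤
        C * (if k = 0 then 1 else |(k : ℝ)| ^ (-(2 * ν))) *
          (nL2 f * nL2 g) ^ (2 - 2 * ν) * (nH1 f * nH1 g) ^ (2 * ν) := by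
  refine ⟨2, two_pos, fun f g ν k hf hg _ _ _ _ hf1 hg1 hν0 hν1 => ?_⟩
  change ‖twistedInner f g k‖ ^ 2 ≤ _
  have hL0 : 0 ≤ nL2 f * nL2 g := mul_nonneg (nL2_nonneg f) (nL2_nonneg g)
  have hH0 : 0 ≤ nH1 f * nH1 g := mul_nonneg (nH1_nonneg f) (nH1_nonneg g)
  have hL : ‖twistedInner f g k‖ ^ 2 ≤ (nL2 f * nL2 g) ^ 2 := by
    gcongr; exact norm_twistedInner_le_nL2_mul hf hg k
  calc ‖twistedInner f g k‖ ^ 2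
      ≤ ((nL2 f * nL2 g) ^ 2) ^ (1 - ν) * (2 * (1 + (k : ℝ) ^ 2)⁻¹ * (nH1 f * nH1 g) ^ 2) ^ ν :=
        le_rpow_mul_rpow_of_le_of_le (by positivity) hL
          (sq_norm_twistedInner_le_nH1_mul hf hg hf1 hg1 k) hν0 hν1
    _ = 2 ^ ν * ((1 + (k : ℝ) ^ 2)⁻¹) ^ ν *
          (nL2 f * nL2 g) ^ (2 - 2 * ν) * (nH1 f * nH1 g) ^ (2 * ν) := by
        rw [mul_rpow (by positivity) (by positivity), mul_rpow zero_le_two (by positivity),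
          ← rpow_natCast (nL2 f * nL2 g), ← rpow_natCast (nH1 f * nH1 g), ← rpow_mul hL0,
          ← rpow_mul hH0]
        push_cast
        ring_nf
    _ ≤ 2 * (if k = 0 then 1 else |(k : ℝ)| ^ (-(2 * ν))) *
          (nL2 f * nL2 g) ^ (2 - 2 * ν) * (nH1 f * nH1 g) ^ (2 * ν) := by
        gcongr
        · exact rpow_le_self_of_one_le one_le_two hν1
        · exact inv_one_add_sq_rpow_le k hν0
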